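/- arXiv:1104.3307 — 3 statements merged into one kernel-verified Lean document; each statement's English description precedes it below -/
import Mathlib

section
/- In ℝ^10 with coordinates indexed by 2-element subsets of {1,…,5}, define v(I)_{jk} = 1 if |I ∩ {j,k}| = 1 and 0 otherwise, and d_a = v({a}) for a = 1,…,5. Then the solution set in ℝ^11 of the system a_1·v({2,3}) + a_2·v({2,4}) + a_3·v({2,5}) + a_4·v({3,4}) + a_5·v({3,5}) + a_6·v({4,5}) = a_7·d_1 + a_8·d_2 + a_9·d_3 + a_10·d_4 + a_11·d_5 is exactly the set of scalar multiples of (1,1,1,1,1,1,1,2,2,2,2). -/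
/-- Index type: 2-element subsets of {1,…,n} (modeled as `Fin n`, 0-based). -/
def Pair (n : ℕ) := {s : Finset (Fin n) // s.card = 2}

noncomputable instance (n : ℕ) : Fintype (Pair n) := by unfold Pair; infer_instance

/-- The vector v(I): coordinate at the pair {j,k} is 1 iff |I ∩ {j,k}| = 1. -/
def v (n : ℕ) (I : Finset (Fin n)) : Pair n → ℝ :=
  fun s => if (I ∩ s.val).card = 1 then 1 else 0

/-- d_a = v({a}). -/
def d (n : ℕ) (a : Fin n) : Pair n → ℝ := v n {a}

/-! At the pair `{j, k}` the vector `v I` is `1` exactly when `I` separates `j` from `k`, and `d a`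
is `1` exactly when `a ∈ {j, k}`. The vector equation is therefore a system of ten linear
equations in eleven unknowns, one for each pair, and its solutions form a line. -/

namespace Pair
variable {n : ℕ}

def mk (j k : Fin n) (h : j ≠ k) : Pair n := ⟨{j, k}, Finset.card_pair h⟩

theorem funext_iff {β : Type*} {f g : Pair n → β} :
    f = g ↔ ∀ j k (h : j ≠ k), f (mk j k h) = g (mk j k h) := by
  refine ⟨fun h _ _ _ => h ▸ rfl, fun h => funext fun ⟨s, hs⟩ => ?_⟩
  obtain ⟨j, k, hjk, rfl⟩ := Finset.card_eq_two.mp hs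
  exact h j k hjk

end Pair

theorem Finset.card_inter_pair_eq_one_iff {α : Type*} [DecidableEq α] {I : Finset α} {j k : α}
    (h : j ≠ k) :
    (I ∩ {j, k}).card = 1 ↔ ¬(j ∈ I ↔ k ∈ I) := by
  by_cases hj : j ∈ I <;> by_cases hk : k ∈ I <;>
    simp [Finset.inter_insert_of_mem, Finset.inter_insert_of_notMem, Finset.inter_singleton_of_mem,
      Finset.inter_singleton_of_notMem, hj, hk, h]

theorem v_mk {n : ℕ} (I : Finset (Fin n)) (j k : Fin n) (h : j ≠ k) :
    v n I (Pair.mk j k h) = if (j ∈ I ↔ k ∈ I) then 0 else 1 := by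
  simp only [v, Pair.mk, Finset.card_inter_pair_eq_one_iff h, ite_not]

theorem d_mk {n : ℕ} (a j k : Fin n) (h : j ≠ k) :
    d n a (Pair.mk j k h) = if j = a ∨ k = a then 1 else 0 := by
  rw [d, v_mk]
  by_cases hj : j = a <;> by_cases hk : k = a <;> simp_all

/-- Local irreducibility of the Psi-class ψ₁ (ends 1,…,5 modeled as 0,…,4 : Fin 5). -/
theorem local_irreducibility_psi :
    {a : Fin 11 → ℝ |
        a 0 • v 5 {1, 2} + a 1 • v 5 {1, 3} + a 2 • v 5 {1, 4}
          + a 3 • v 5 {2, 3} + a 4 • v 5 {2, 4} + a 5 • v 5 {3, 4}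
          = a 6 • d 5 0 + a 7 • d 5 1 + a 8 • d 5 2 + a 9 • d 5 3 + a 10 • d 5 4}
      = {a : Fin 11 → ℝ | ∃ c : ℝ, a = c • ![1, 1, 1, 1, 1, 1, 1, 2, 2, 2, 2]} := by
  ext a
  constructor
  · intro h
    have at_pair (j k : Fin 5) (hjk : j ≠ k) := congrFun h (Pair.mk j k hjk)
    -- Complementary pairs in `{1, 2, 3, 4}` (e12/e34, e13/e24, e14/e23) give equal left sides,
    -- which forces `a 7 = a 8 = a 9 = a 10`.
    have e01 : a 0 + a 1 + a 2 = a 6 + a 7 := by simpa [v_mk, d_mk] using at_pair 0 1 (by decide)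
    have e02 : a 0 + a 3 + a 4 = a 6 + a 8 := by simpa [v_mk, d_mk] using at_pair 0 2 (by decide)
    have e03 : a 1 + a 3 + a 5 = a 6 + a 9 := by simpa [v_mk, d_mk] using at_pair 0 3 (by decide)
    have e04 : a 2 + a 4 + a 5 = a 6 + a 10 := by simpa [v_mk, d_mk] using at_pair 0 4 (by decide)
    have e12 : a 1 + a 2 + a 3 + a 4 = a 7 + a 8 := by simpa [v_mk, d_mk] using at_pair 1 2 (by decide)
    have e13 : a 0 + a 2 + a 3 + a 5 = a 7 + a 9 := by simpa [v_mk, d_mk] using at_pair 1 3 (by decide)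
    have e14 : a 0 + a 1 + a 4 + a 5 = a 7 + a 10 := by simpa [v_mk, d_mk] using at_pair 1 4 (by decide)
    have e23 : a 0 + a 1 + a 4 + a 5 = a 8 + a 9 := by simpa [v_mk, d_mk] using at_pair 2 3 (by decide)
    have e24 : a 0 + a 2 + a 3 + a 5 = a 8 + a 10 := by simpa [v_mk, d_mk] using at_pair 2 4 (by decide)
    have e34 : a 1 + a 2 + a 3 + a 4 = a 9 + a 10 := by simpa [v_mk, d_mk] using at_pair 3 4 (by decide)
    exact ⟨a 0, funext fun i => by fin_cases i <;> simp <;> linarith⟩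
  · rintro ⟨c, rfl⟩
    refine Pair.funext_iff.mpr fun j k hjk => ?_
    fin_cases j <;> fin_cases k <;> simp [v_mk, d_mk] at hjk ⊢ <;> ring
end

section
/- In ℝ^15 with coordinates indexed by 2-element subsets of {1,…,6}, define v(I)_{jk} = 1 if |I ∩ {j,k}| = 1 and 0 otherwise, and d_a = v({a}). Let L' be the span of d_1,…,d_6 together with v({1,2,3}). Then for (a_1,…,a_6) ∈ ℝ^6, the combination a_1·v({1,2}) + a_2·v({1,3}) + a_3·v({2,3}) + a_4·v({4,5}) + a_5·v({4,6}) + a_6·v({5,6}) lies in L' if and only if a_1 = a_2 = a_3 and a_4 = a_5 = a_6. -/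
namespace Pair

variable {n : ℕ}

def of {x y : Fin n} (h : x ≠ y) : Pair n := ⟨{x, y}, Finset.card_pair h⟩

theorem exists_eq_of (s : Pair n) : ∃ (x y : Fin n) (h : x ≠ y), s = of h := by
  obtain ⟨s, hs⟩ := s
  obtain ⟨x, y, h, rfl⟩ := Finset.card_eq_two.mp hs
  exact ⟨x, y, h, rfl⟩

end Pair

section CutVectors

variable {n : ℕ}

theorem v_of (I : Finset (Fin n)) {x y : Fin n} (h : x ≠ y) :
    v n I (Pair.of h) = if (x ∈ I ↔ y ∈ I) then 0 else 1 := by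
  unfold v Pair.of
  by_cases hx : x ∈ I <;> by_cases hy : y ∈ I <;>
    simp [Finset.inter_insert_of_mem, Finset.inter_insert_of_notMem,
      Finset.inter_singleton_of_mem, Finset.inter_singleton_of_notMem, hx, hy, h]

theorem v_compl (I : Finset (Fin n)) : v n Iᶜ = v n I := by
  ext s
  obtain ⟨x, y, h, rfl⟩ := s.exists_eq_of
  simp only [v_of, Finset.mem_compl, not_iff_not]

theorem v_pair_add_v_pair_add_v_pair {x y z : Fin n} (hxy : x ≠ y) (hxz : x ≠ z) (hyz : y ≠ z) :
    v n {x, y} + v n {x, z} + v n {y, z} = d n x + d n y + d n z + v n {x, y, z} := by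
  ext s
  obtain ⟨p, q, h, rfl⟩ := s.exists_eq_of
  simp only [Pi.add_apply, d, v_of, Finset.mem_insert, Finset.mem_singleton]
  by_cases hpx : p = x <;> by_cases hpy : p = y <;> by_cases hpz : p = z <;>
    by_cases hqx : q = x <;> by_cases hqy : q = y <;> by_cases hqz : q = z <;>
    simp_all

theorem v_pair_add_v_pair_add_v_pair_mem_span {I : Finset (Fin n)} {x y z : Fin n}
    (hxy : x ≠ y) (hxz : x ≠ z) (hyz : y ≠ z) (hI : v n {x, y, z} = v n I) :
    v n {x, y} + v n {x, z} + v n {y, z} ∈ Submodule.span ℝ (Set.range (d n) ∪ {v n I}) := by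
  have hd (a : Fin n) : d n a ∈ Submodule.span ℝ (Set.range (d n) ∪ {v n I}) :=
    Submodule.subset_span (.inl ⟨a, rfl⟩)
  have hv : v n I ∈ Submodule.span ℝ (Set.range (d n) ∪ {v n I}) :=
    Submodule.subset_span (.inr rfl)
  rw [v_pair_add_v_pair_add_v_pair hxy hxz hyz, hI]
  exact add_mem (add_mem (add_mem (hd x) (hd y)) (hd z)) hv

end CutVectors

section FourPoint

variable {n : ℕ} {i j k l : Fin n}

def fourPoint (hij : i ≠ j) (hkl : k ≠ l) (hik : i ≠ k) (hjl : j ≠ l) :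
    (Pair n → ℝ) →ₗ[ℝ] ℝ :=
  let ev (s : Pair n) : (Pair n → ℝ) →ₗ[ℝ] ℝ := LinearMap.proj s
  ev (.of hij) + ev (.of hkl) - ev (.of hik) - ev (.of hjl)

variable (hij : i ≠ j) (hkl : k ≠ l) (hik : i ≠ k) (hjl : j ≠ l)

theorem fourPoint_apply (f : Pair n → ℝ) :
    fourPoint hij hkl hik hjl f = f (.of hij) + f (.of hkl) - f (.of hik) - f (.of hjl) :=
  rfl

theorem fourPoint_v {I : Finset (Fin n)} (hI : (i ∈ I ↔ l ∈ I) ∨ (j ∈ I ↔ k ∈ I)) :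
    fourPoint hij hkl hik hjl (v n I) = 0 := by
  simp only [fourPoint_apply, v_of]
  by_cases hi : i ∈ I <;> by_cases hj : j ∈ I <;> by_cases hk : k ∈ I <;> by_cases hl : l ∈ I <;>
    simp_all

theorem fourPoint_d (a : Fin n) : fourPoint hij hkl hik hjl (d n a) = 0 := by
  refine fourPoint_v hij hkl hik hjl ?_
  simp only [Finset.mem_singleton]
  grind

theorem fourPoint_eq_zero_of_mem_span {I : Finset (Fin n)}
    (hI : (i ∈ I ↔ l ∈ I) ∨ (j ∈ I ↔ k ∈ I)) {w : Pair n → ℝ}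
    (hw : w ∈ Submodule.span ℝ (Set.range (d n) ∪ {v n I})) :
    fourPoint hij hkl hik hjl w = 0 := by
  suffices Set.range (d n) ∪ {v n I} ⊆ LinearMap.ker (fourPoint hij hkl hik hjl) from
    Submodule.span_le.mpr this hw
  rintro _ (⟨a, rfl⟩ | rfl)
  · exact fourPoint_d hij hkl hik hjl a
  · exact fourPoint_v hij hkl hik hjl hI

end FourPoint

/-- Non-local-irreducibility computation for D^{{1,2,3}} in M_{0,6}
(ends 1,…,6 modeled as 0,…,5 : Fin 6). L'\'' is spanned by d₁,…,d₆ and v({1,2,3}). -/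
theorem vital_divisor_M06_weights (a : Fin 6 → ℝ) :
    (a 0 • v 6 {0, 1} + a 1 • v 6 {0, 2} + a 2 • v 6 {1, 2}
        + a 3 • v 6 {3, 4} + a 4 • v 6 {3, 5} + a 5 • v 6 {4, 5}
      ∈ Submodule.span ℝ (Set.range (d 6) ∪ {v 6 {0, 1, 2}}))
    ↔ (a 0 = a 1 ∧ a 1 = a 2 ∧ a 3 = a 4 ∧ a 4 = a 5) := by
  set L := Submodule.span ℝ (Set.range (d 6) ∪ {v 6 {0, 1, 2}})
  constructor
  · intro hw
    have h₁ := fourPoint_eq_zero_of_mem_span (i := 0) (j := 1) (k := 2) (l := 3)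
      (by decide) (by decide) (by decide) (by decide) (by decide) hw
    have h₂ := fourPoint_eq_zero_of_mem_span (i := 0) (j := 2) (k := 3) (l := 1)
      (by decide) (by decide) (by decide) (by decide) (by decide) hw
    have h₃ := fourPoint_eq_zero_of_mem_span (i := 3) (j := 4) (k := 5) (l := 0)
      (by decide) (by decide) (by decide) (by decide) (by decide) hw
    have h₄ := fourPoint_eq_zero_of_mem_span (i := 3) (j := 5) (k := 0) (l := 4)
      (by decide) (by decide) (by decide) (by decide) (by decide) hw
    simp [fourPoint_apply, v_of] at h₁ h₂ h₃ h₄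
    refine ⟨by linarith, by linarith, by linarith, by linarith⟩
  · rintro ⟨h₀₁, h₁₂, h₃₄, h₄₅⟩
    rw [← h₁₂, ← h₀₁, ← h₄₅, ← h₃₄]
    have h012 := v_pair_add_v_pair_add_v_pair_mem_span (n := 6) (I := {0, 1, 2})
      (x := 0) (y := 1) (z := 2) (by decide) (by decide) (by decide) rfl
    have h345 := v_pair_add_v_pair_add_v_pair_mem_span (n := 6) (I := {0, 1, 2})
      (x := 3) (y := 4) (z := 5) (by decide) (by decide) (by decide) (by rw [← v_compl]; rfl)
    convert add_mem (L.smul_mem (a 0) h012) (L.smul_mem (a 3) h345) using 1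
    module
end

section
/- Let T be a finite tree in which every vertex has degree 1 or 3, with exactly n ≥ 4 leaves. Define an NNI move as follows: contract an internal edge (an edge joining two degree-3 vertices) to obtain a degree-4 vertex, then split that degree-4 vertex into two degree-3 vertices joined by a new edge, in one of the other two possible ways of partitioning the four incident branches into two pairs. Then the graph whose vertices are (isomorphism classes of) trivalent trees with leaves labeled bijectively by {1,…,n}, and whose edges connect trees related by a single NNI move, is connected. -/
/-!
Every tree is joined by NNI moves to the caterpillar whose splits are the initial segments
`{0, …, k-1}`, and these segments can be created one at a time. Let `P` be a subtree of `T` and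
`x` a leaf outside it. If some edge separates `x` from `P` without cutting off exactly `P`, take
the one `B` closest to `P`; the NNI move at `B` that swaps the branch below `B` avoiding `x` with
`P` removes one edge from the path between `x` and `P`. Once there is no such edge, `P ∪ {x}` is
compatible with every split of `T`, hence a split of `T` because split systems of trees are
maximal: a compatible split system has at most `n - 3` complementary pairs, since rooting it at a
leaf turns it into a laminar family of non-singletons.
-/

/-- Two subsets A, B of the leaf set are compatible splits if one of the four
corners A∩B, A\B, B\A, (A∪B)ᶜ is empty, i.e. the bipartitions {A,Aᶜ}, {B,Bᶜ}
can be realized by two edges of a common tree. -/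
def Compatible {n : ℕ} (A B : Finset (Fin n)) : Prop :=
  A ⊆ B ∨ B ⊆ A ∨ A ∩ B = ∅ ∨ A ∪ B = Finset.univ

/-- A trivalent tree with n labeled leaves, encoded (up to isomorphism) by its
set of nontrivial splits: a pairwise compatible, complement-closed family of
subsets A with 2 ≤ |A| ≤ n-2, consisting of exactly n-3 complementary pairs
(i.e. 2(n-3) sets).  Such maximal compatible split systems correspond exactly
to isomorphism classes of trees with n labeled leaves all of whose internal
vertices have degree 3. -/
structure TrivalentTree (n : ℕ) where
  splits : Finset (Finset (Fin n))
  card_le : ∀ A ∈ splits, 2 ≤ A.card ∧ A.card ≤ n - 2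
  compat : ∀ A ∈ splits, ∀ B ∈ splits, Compatible A B
  compl_mem : ∀ A ∈ splits, Finset.univ \ A ∈ splits
  card_eq : splits.card = 2 * (n - 3)

/-- The NNI graph: two trivalent trees are adjacent iff they differ in exactly
one complementary pair of splits, i.e. exactly when one is obtained from the
other by contracting one internal edge and re-expanding the resulting 4-valent
vertex in one of the two other ways. -/
def NNIGraph (n : ℕ) : SimpleGraph (TrivalentTree n) where
  Adj T T' := (T.splits \ T'.splits).card = 2 ∧ (T'.splits \ T.splits).card = 2
  symm := ⟨fun _ _ h => ⟨h.2, h.1⟩⟩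
  loopless := ⟨fun T h => by simp [Finset.sdiff_self] at h⟩

open Finset

namespace Finset

variable {α : Type*} {L : Finset (Finset α)} {A : Finset α} {a : α}

theorem subset_of_minimal_of_mem (hlam : ∀ A ∈ L, ∀ B ∈ L, A ⊆ B ∨ B ⊆ A ∨ Disjoint A B)
    (hA : Minimal (· ∈ L) A) (ha : a ∈ A) {B : Finset α} (hB : B ∈ L) (haB : a ∈ B) : A ⊆ B := by
  rcases hlam A hA.prop B hB with h | h | h
  · exact h
  · exact hA.2 hB h
  · exact absurd haB (disjoint_left.mp h ha)

variable [DecidableEq α]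

theorem injOn_erase_of_minimal (hlam : ∀ A ∈ L, ∀ B ∈ L, A ⊆ B ∨ B ⊆ A ∨ Disjoint A B)
    (hA : Minimal (· ∈ L) A) (ha : a ∈ A) {b : α} (hb : b ∈ A) (hab : a ≠ b) :
    Set.InjOn (·.erase a) (L : Set (Finset α)) := by
  -- a collision `B.erase a = C` with `a ∈ B` would make `C` meet `A` in `b` without containing it
  have herase_ne : ∀ B ∈ L, ∀ C ∈ L, a ∈ B → a ∉ C → B.erase a ≠ C.erase a := by
    intro B hB C hC haB haC hBC
    rw [erase_eq_of_notMem haC] at hBC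
    have hbC : b ∈ C :=
      hBC ▸ mem_erase.mpr ⟨hab.symm, subset_of_minimal_of_mem hlam hA ha hB haB hb⟩
    rcases hlam A hA.prop C hC with h | h | h
    · exact haC (h ha)
    · exact haC (hA.2 hC h ha)
    · exact disjoint_left.mp h hb hbC
  intro B hB C hC hBC
  by_cases haB : a ∈ B <;> by_cases haC : a ∈ C
  · exact erase_injOn' a haB haC hBC
  · exact absurd hBC (herase_ne B hB C hC haB haC)
  · exact absurd hBC.symm (herase_ne C hC B hB haC haB)
  · simpa [erase_eq_of_notMem haB, erase_eq_of_notMem haC] using hBC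

theorem card_lt_card_of_laminar {S : Finset α} (hS : S.Nonempty)
    (hLS : ∀ A ∈ L, A ⊆ S) (hL : ∀ A ∈ L, 2 ≤ #A)
    (hlam : ∀ A ∈ L, ∀ B ∈ L, A ⊆ B ∨ B ⊆ A ∨ Disjoint A B) : #L < #S := by
  induction hk : #S generalizing S L with
  | zero => simp [hS.ne_empty] at hk
  | succ k ih =>
  obtain rfl | hLne := L.eq_empty_or_nonempty
  · simp
  obtain ⟨A, hA⟩ := exists_minimal_of_wellFoundedLT (· ∈ L) hLne
  obtain ⟨a, ha, b, hb, hab⟩ := one_lt_card.mp (hL A hA.prop)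
  have hL' : ∀ B ∈ L.erase A, 2 ≤ #(B.erase a) := by
    intro B hB
    obtain ⟨hBA, hB⟩ := mem_erase.mp hB
    by_cases haB : a ∈ B
    · have := card_lt_card (ssubset_of_subset_of_ne (subset_of_minimal_of_mem hlam hA ha hB haB)
        hBA.symm)
      have := hL A hA.prop
      rw [card_erase_of_mem haB]
      omega
    · rw [erase_eq_of_notMem haB]
      exact hL B hB
  have key := ih (S := S.erase a) (L := (L.erase A).image (·.erase a))
    ⟨b, mem_erase.mpr ⟨hab.symm, hLS A hA.prop hb⟩⟩
    (forall_mem_image.mpr fun B hB => erase_subset_erase a (hLS B (mem_of_mem_erase hB)))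
    (forall_mem_image.mpr hL')
    (by
      simp only [forall_mem_image]
      intro B hB C hC
      rcases hlam B (mem_of_mem_erase hB) C (mem_of_mem_erase hC) with h | h | h
      · exact Or.inl (erase_subset_erase a h)
      · exact Or.inr (Or.inl (erase_subset_erase a h))
      · exact Or.inr (Or.inr (h.mono (erase_subset a B) (erase_subset a C))))
    (by rw [card_erase_of_mem (hLS A hA.prop ha), hk, Nat.add_sub_cancel])
  rw [card_image_of_injOn ((injOn_erase_of_minimal hlam hA ha hb hab).mono (by simp)),
    card_erase_of_mem hA.prop] at key
  have := card_pos.mpr hLne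
  omega

theorem exists_isGreatest_of_chain {F : Finset (Finset α)} (hF : F.Nonempty)
    (hchain : ∀ A ∈ F, ∀ B ∈ F, A ⊆ B ∨ B ⊆ A) : ∃ B, IsGreatest (F : Set (Finset α)) B :=
  ⟨F.sup' hF id, sup'_mem (F : Set (Finset α))
    (fun A hA B hB => (hchain A hA B hB).elim (fun h => by simpa [sup_eq_right.mpr h])
      (fun h => by simpa [sup_eq_left.mpr h])) F hF id (fun _ h => h),
    fun _ hA => le_sup' id hA⟩

end Finset

variable {n : ℕ}

section Compatible

variable {A B : Finset (Fin n)}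

theorem ne_compl_of_mem {x : Fin n} (hx : x ∈ A) : A ≠ Aᶜ :=
  fun h => mem_compl.mp (h ▸ hx) hx

theorem compatible_iff : Compatible A B ↔ A ⊆ B ∨ B ⊆ A ∨ Disjoint A B ∨ Aᶜ ⊆ B := by
  simp only [Compatible, disjoint_iff_inter_eq_empty, eq_univ_iff_forall, mem_union,
    subset_iff, mem_compl, or_iff_not_imp_left]

theorem Compatible.symm (h : Compatible A B) : Compatible B A := by
  rcases h with h | h | h | h
  · exact Or.inr (Or.inl h)
  · exact Or.inl h
  · exact Or.inr (Or.inr (Or.inl (by rwa [inter_comm])))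
  · exact Or.inr (Or.inr (Or.inr (by rwa [union_comm])))

theorem Compatible.compl_left (h : Compatible A B) : Compatible Aᶜ B := by
  rw [compatible_iff] at h ⊢
  rcases h with h | h | h | h
  · exact Or.inr (Or.inr (Or.inr (by rwa [compl_compl])))
  · exact Or.inr (Or.inr (Or.inl (disjoint_compl_left_iff.mpr h)))
  · exact Or.inr (Or.inl (subset_compl_iff_disjoint_left.mpr h))
  · exact Or.inl h

theorem Compatible.compl_right (h : Compatible A B) : Compatible A Bᶜ :=
  h.symm.compl_left.symm

theorem Compatible.of_compl_right (h : Compatible A Bᶜ) : Compatible A B := by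
  simpa using h.compl_right

theorem compatible_refl (A : Finset (Fin n)) : Compatible A A :=
  Or.inl subset_rfl

theorem compatible_compl_self (A : Finset (Fin n)) : Compatible A Aᶜ :=
  (compatible_refl A).compl_right

theorem compatible_singleton (x : Fin n) (B : Finset (Fin n)) : Compatible {x} B := by
  rw [compatible_iff]
  by_cases hx : x ∈ B
  · exact Or.inl (singleton_subset_iff.mpr hx)
  · exact Or.inr (Or.inr (Or.inl (disjoint_singleton_left.mpr hx)))

theorem Compatible.subset_or_subset {x y : Fin n} (h : Compatible A B) (hxA : x ∈ A)
    (hxB : x ∈ B) (hyA : y ∉ A) (hyB : y ∉ B) : A ⊆ B ∨ B ⊆ A := by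
  rcases compatible_iff.mp h with h | h | h | h
  · exact Or.inl h
  · exact Or.inr h
  · exact absurd hxB (disjoint_left.mp h hxA)
  · exact absurd (h (mem_compl.mpr hyA)) hyB

end Compatible

structure IsSplitSystem (F : Finset (Finset (Fin n))) : Prop where
  card_mem : ∀ A ∈ F, 2 ≤ #A ∧ #A ≤ n - 2
  compatible : ∀ A ∈ F, ∀ B ∈ F, Compatible A B
  compl_mem : ∀ A ∈ F, Aᶜ ∈ F

namespace IsSplitSystem

variable {F : Finset (Finset (Fin n))}

theorem card_filter_mem_eq (hF : IsSplitSystem F) (r : Fin n) :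
    #(F.filter (r ∈ ·)) = #(F.filter (r ∉ ·)) := by
  refine card_nbij' compl compl ?_ ?_ (fun B _ => compl_compl B) (fun B _ => compl_compl B) <;>
    intro B hB <;> simp only [coe_filter, Set.mem_ofPred_eq, mem_compl, not_not] at hB ⊢ <;>
    exact ⟨hF.compl_mem B hB.1, hB.2⟩

theorem card_filter_notMem_le (hF : IsSplitSystem F) (r : Fin n) :
    #(F.filter (r ∉ ·)) ≤ n - 3 := by
  obtain h | ⟨A, hA⟩ := (F.filter (r ∉ ·)).eq_empty_or_nonempty
  · simp [h]
  have hn : 4 ≤ n := by have := hF.card_mem A (mem_filter.mp hA).1; omega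
  have hS : #(univ.erase r) = n - 1 := by
    rw [card_erase_of_mem (mem_univ r), card_univ, Fintype.card_fin]
  have hSF : univ.erase r ∉ F.filter (r ∉ ·) := fun h => by
    have := (hF.card_mem _ (mem_filter.mp h).1).2
    omega
  have hsub : ∀ B ∈ F.filter (r ∉ ·), B ⊆ univ.erase r := fun B hB =>
    subset_erase.mpr ⟨subset_univ B, (mem_filter.mp hB).2⟩
  have hlam := card_lt_card_of_laminar (S := univ.erase r)
    (L := insert (univ.erase r) (F.filter (r ∉ ·))) (card_pos.mp (by omega))
    (forall_mem_insert _ _ _ |>.mpr ⟨subset_rfl, hsub⟩)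
    (forall_mem_insert _ _ _ |>.mpr
      ⟨by omega, fun B hB => (hF.card_mem B (mem_filter.mp hB).1).1⟩)
    (by
      simp only [forall_mem_insert]
      refine ⟨⟨Or.inl subset_rfl, fun B hB => Or.inr (Or.inl (hsub B hB))⟩,
        fun B hB => ⟨Or.inl (hsub B hB), fun C hC => ?_⟩⟩
      rw [mem_filter] at hB hC
      rcases compatible_iff.mp (hF.compatible B hB.1 C hC.1) with h | h | h | h
      · exact Or.inl h
      · exact Or.inr (Or.inl h)
      · exact Or.inr (Or.inr h)
      · exact absurd (h (mem_compl.mpr hB.2)) hC.2)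
  rw [card_insert_of_notMem hSF, hS] at hlam
  omega

theorem card_le (hF : IsSplitSystem F) : #F ≤ 2 * (n - 3) := by
  obtain rfl | ⟨A, hA⟩ := F.eq_empty_or_nonempty
  · simp
  obtain ⟨r, -⟩ := card_pos.mp (by linarith [(hF.card_mem A hA).1] : 0 < #A)
  rw [← card_filter_add_card_filter_not (p := (r ∈ ·)), hF.card_filter_mem_eq r]
  linarith [hF.card_filter_notMem_le r]

theorem mono {F' : Finset (Finset (Fin n))} (hF : IsSplitSystem F) (hF' : F' ⊆ F)
    (hcompl : ∀ A ∈ F', Aᶜ ∈ F') : IsSplitSystem F' where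
  card_mem A hA := hF.card_mem A (hF' hA)
  compatible A hA B hB := hF.compatible A (hF' hA) B (hF' hB)
  compl_mem := hcompl

theorem insert_compl {N : Finset (Fin n)} (hF : IsSplitSystem F) (hN : 2 ≤ #N ∧ #N ≤ n - 2)
    (hNF : ∀ D ∈ F, Compatible N D) : IsSplitSystem (insert N (insert Nᶜ F)) where
  card_mem := by
    have : #Nᶜ = n - #N := by rw [card_compl, Fintype.card_fin]
    simp only [forall_mem_insert]
    exact ⟨hN, by omega, hF.card_mem⟩
  compatible := by
    have hN' : ∀ B ∈ insert N (insert Nᶜ F), Compatible N B := by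
      simp only [forall_mem_insert]
      exact ⟨compatible_refl N, compatible_compl_self N, hNF⟩
    intro A hA B hB
    simp only [mem_insert] at hA
    rcases hA with rfl | rfl | hA
    · exact hN' B hB
    · exact (hN' B hB).compl_left
    simp only [mem_insert] at hB
    rcases hB with rfl | rfl | hB
    · exact (hNF A hA).symm
    · exact (hNF A hA).compl_left.symm
    · exact hF.compatible A hA B hB
  compl_mem := by
    intro A hA
    simp only [mem_insert] at hA ⊢
    rcases hA with rfl | rfl | hA
    · exact Or.inr (Or.inl rfl)
    · exact Or.inl (compl_compl N)
    · exact Or.inr (Or.inr (hF.compl_mem A hA))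

end IsSplitSystem

namespace TrivalentTree

theorem ext {T T' : TrivalentTree n} (h : T.splits = T'.splits) : T = T' := by
  cases T
  cases T'
  congr

theorem eq_of_subset {T T' : TrivalentTree n} (h : T.splits ⊆ T'.splits) : T = T' :=
  ext (eq_of_subset_of_card_le h (by rw [T.card_eq, T'.card_eq]))

def ofSplitSystem {F : Finset (Finset (Fin n))} (hF : IsSplitSystem F)
    (hcard : #F = 2 * (n - 3)) : TrivalentTree n where
  splits := F
  card_le := hF.card_mem
  compat := hF.compatible
  compl_mem A hA := by simpa [compl_eq_univ_sdiff] using hF.compl_mem A hA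
  card_eq := hcard

section

variable (T : TrivalentTree n)

theorem compl_mem' {A : Finset (Fin n)} (hA : A ∈ T.splits) : Aᶜ ∈ T.splits := by
  simpa [compl_eq_univ_sdiff] using T.compl_mem A hA

theorem isSplitSystem : IsSplitSystem T.splits where
  card_mem := T.card_le
  compatible := T.compat
  compl_mem _ := T.compl_mem'

theorem mem_splits_of_compatible {I : Finset (Fin n)} (hI : 2 ≤ #I ∧ #I ≤ n - 2)
    (hIT : ∀ D ∈ T.splits, Compatible I D) : I ∈ T.splits := by
  by_contra hIT'
  have hIcT : Iᶜ ∉ T.splits := fun h => hIT' (by simpa using T.compl_mem' h)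
  obtain ⟨x, hx⟩ := card_pos.mp (by omega : 0 < #I)
  have := (T.isSplitSystem.insert_compl hI hIT).card_le
  rw [card_insert_of_notMem (by simp [ne_compl_of_mem hx, hIT']), card_insert_of_notMem hIcT,
    T.card_eq] at this
  omega

theorem exists_adj_of_exchange {B N : Finset (Fin n)} (hB : B ∈ T.splits)
    (hN : 2 ≤ #N ∧ #N ≤ n - 2) (hNT : N ∉ T.splits)
    (hNcompat : ∀ D ∈ T.splits \ {B, Bᶜ}, Compatible N D) :
    ∃ T' : TrivalentTree n, (NNIGraph n).Adj T T' ∧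
      T'.splits = insert N (insert Nᶜ (T.splits \ {B, Bᶜ})) := by
  have hBc : Bᶜ ∈ T.splits := T.compl_mem' hB
  have hNcT : Nᶜ ∉ T.splits := fun h => hNT (by simpa using T.compl_mem' h)
  obtain ⟨x, hx⟩ := card_pos.mp (by omega : 0 < #N)
  obtain ⟨y, hy⟩ := card_pos.mp (by linarith [(T.card_le B hB).1] : 0 < #B)
  have hF₀ : IsSplitSystem (T.splits \ {B, Bᶜ}) := T.isSplitSystem.mono sdiff_subset (by
    intro A hA
    rw [mem_sdiff, mem_insert, mem_singleton] at hA ⊢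
    refine ⟨T.compl_mem' hA.1, fun h => hA.2 ?_⟩
    rcases h with h | h
    · exact Or.inr (compl_eq_comm.mp h).symm
    · exact Or.inl (compl_injective h))
  have hcard₀ : #(T.splits \ {B, Bᶜ}) = #T.splits - 2 := by
    rw [card_sdiff_of_subset (insert_subset hB (singleton_subset_iff.mpr hBc)),
      card_pair (ne_compl_of_mem hy)]
  have hNF₀ : N ∉ T.splits \ {B, Bᶜ} := fun h => hNT (mem_sdiff.mp h).1
  have hNcF₀ : Nᶜ ∉ T.splits \ {B, Bᶜ} := fun h => hNcT (mem_sdiff.mp h).1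
  have hcard : #(insert N (insert Nᶜ (T.splits \ {B, Bᶜ}))) = 2 * (n - 3) := by
    rw [card_insert_of_notMem (by simp [ne_compl_of_mem hx, hNF₀]), card_insert_of_notMem hNcF₀,
      hcard₀, T.card_eq]
    omega
  refine ⟨ofSplitSystem (hF₀.insert_compl hN hNcompat) hcard, ⟨?_, ?_⟩, rfl⟩
  · rw [← card_pair (ne_compl_of_mem hy)]
    congr 1
    ext A
    simp only [ofSplitSystem, mem_sdiff, mem_insert, mem_singleton]
    grind
  · rw [← card_pair (ne_compl_of_mem hx)]
    congr 1
    ext A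
    simp only [ofSplitSystem, mem_sdiff, mem_insert, mem_singleton]
    grind

end

variable {T : TrivalentTree n} {P B B₁ D : Finset (Fin n)} {x : Fin n}

/-- The sides containing the leaf `x` of the edges on the path from `x` to the subtree with leaf
set `P`, except for the edge cutting off `P` itself. -/
def pathSplits (T : TrivalentTree n) (P : Finset (Fin n)) (x : Fin n) : Finset (Finset (Fin n)) :=
  T.splits.filter fun B => x ∈ B ∧ Disjoint B P ∧ B ≠ Pᶜ

theorem mem_pathSplits :
    B ∈ T.pathSplits P x ↔ B ∈ T.splits ∧ x ∈ B ∧ Disjoint B P ∧ B ≠ Pᶜ :=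
  mem_filter

theorem insert_mem_of_pathSplits_eq_empty (hP : ∀ D ∈ T.splits, Compatible P D)
    (hI : 2 ≤ #(insert x P) ∧ #(insert x P) ≤ n - 2) (h : T.pathSplits P x = ∅) :
    insert x P ∈ T.splits := by
  have hcompl : ∀ D ∈ T.splits, x ∈ D → Disjoint D P → D = Pᶜ := fun D hD hxD hDP => by
    by_contra hne
    simpa [h] using mem_pathSplits.mpr ⟨hD, hxD, hDP, hne⟩
  refine T.mem_splits_of_compatible hI fun D hD => compatible_iff.mpr ?_
  have hcompl_sub : (insert x P)ᶜ ⊆ Pᶜ := compl_subset_compl.mpr (subset_insert x P)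
  rcases compatible_iff.mp (hP D hD) with hPD | hDP | hdisj | hcov
  · by_cases hxD : x ∈ D
    · exact Or.inl (insert_subset hxD hPD)
    · have := hcompl Dᶜ (T.compl_mem' hD) (mem_compl.mpr hxD) (disjoint_compl_left_iff.mpr hPD)
      exact Or.inr (Or.inl ((compl_injective this).le.trans (subset_insert x P)))
  · exact Or.inr (Or.inl (hDP.trans (subset_insert x P)))
  · by_cases hxD : x ∈ D
    · exact Or.inr (Or.inr (Or.inr (hcompl_sub.trans (hcompl D hD hxD hdisj.symm).ge)))
    · exact Or.inr (Or.inr (Or.inl (disjoint_insert_left.mpr ⟨hxD, hdisj⟩)))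
  · exact Or.inr (Or.inr (Or.inr (hcompl_sub.trans hcov)))

theorem exists_isGreatest_pathSplits (hPne : P.Nonempty) (h : (T.pathSplits P x).Nonempty) :
    ∃ B, IsGreatest (T.pathSplits P x : Set (Finset (Fin n))) B := by
  obtain ⟨p, hp⟩ := hPne
  refine exists_isGreatest_of_chain h fun A hA C hC => ?_
  rw [mem_pathSplits] at hA hC
  exact (T.compat A hA.1 C hC.1).subset_or_subset hA.2.1 hC.2.1
    (disjoint_right.mp hA.2.2.1 hp) (disjoint_right.mp hC.2.2.1 hp)

/-- `B₁` is the side containing `x` of the edge next to `B` on the path towards the leaf `x`,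
or `{x}` if that edge is the leaf edge of `x`. -/
structure IsChild (T : TrivalentTree n) (B B₁ : Finset (Fin n)) (x : Fin n) : Prop where
  mem : x ∈ B₁
  ssubset : B₁ ⊂ B
  compatible : ∀ D ∈ T.splits, Compatible D B₁
  subset_of_ssubset : ∀ A ∈ T.splits, A ⊂ B → x ∈ A → A ⊆ B₁

theorem exists_isChild (hB : B ∈ T.splits) (hxB : x ∈ B) {y : Fin n} (hyB : y ∉ B) :
    ∃ B₁, T.IsChild B B₁ x := by
  have hxB' : {x} ⊂ B := ssubset_of_subset_of_ne (singleton_subset_iff.mpr hxB) fun h => by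
    simpa [← h] using (T.card_le B hB).1
  have hF : ∀ A ∈ insert {x} (T.splits.filter fun A => A ⊂ B ∧ x ∈ A),
      x ∈ A ∧ A ⊂ B ∧ ∀ D ∈ T.splits, Compatible D A := by
    simp only [forall_mem_insert, mem_filter]
    exact ⟨⟨mem_singleton_self x, hxB', fun D _ => (compatible_singleton x D).symm⟩,
      fun A hA => ⟨hA.2.2, hA.2.1, fun D hD => T.compat D hD A hA.1⟩⟩
  obtain ⟨B₁, hB₁, hmax⟩ := exists_isGreatest_of_chain (insert_nonempty {x} _) fun A hA C hC => by
    rcases mem_insert.mp hA with rfl | hA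
    · exact Or.inl (singleton_subset_iff.mpr (hF C hC).1)
    · exact ((hF C hC).2.2 A (mem_filter.mp hA).1).subset_or_subset (hF A (mem_insert_of_mem hA)).1
        (hF C hC).1 (fun h => hyB ((mem_filter.mp hA).2.1.subset h))
        (fun h => hyB ((hF C hC).2.1.subset h))
  exact ⟨B₁, (hF B₁ hB₁).1, (hF B₁ hB₁).2.1, (hF B₁ hB₁).2.2,
    fun A hA hAB hxA => hmax (mem_insert_of_mem (mem_filter.mpr ⟨hA, hAB, hxA⟩))⟩

/-- `P ∪ B₁` is the new split of the NNI move at `B` exchanging `P` with the child of `B` that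
avoids `x`. -/
theorem compatible_union_of_subset_or_disjoint (hP : ∀ D ∈ T.splits, Compatible P D)
    (hPne : P.Nonempty) (hB : IsGreatest (T.pathSplits P x : Set (Finset (Fin n))) B)
    (hB₁ : T.IsChild B B₁ x) (hD : D ∈ T.splits) (hDB : D ≠ B) (hDBc : D ≠ Bᶜ)
    (hside : D ⊆ B ∨ Disjoint D B) : Compatible (P ∪ B₁) D := by
  obtain ⟨-, hxB, hBP, -⟩ := mem_pathSplits.mp hB.1
  rw [compatible_iff]
  rcases hside with hDB' | hDB'
  · by_cases hxD : x ∈ D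
    · have := hB₁.subset_of_ssubset D hD (ssubset_of_subset_of_ne hDB' hDB) hxD
      exact Or.inr (Or.inl (this.trans subset_union_right))
    rcases compatible_iff.mp (hB₁.compatible D hD) with h | h | h | h
    · exact Or.inr (Or.inl (h.trans subset_union_right))
    · exact absurd (h hB₁.mem) hxD
    · exact Or.inr (Or.inr (Or.inl (disjoint_union_left.mpr ⟨(hBP.mono_left hDB').symm, h.symm⟩)))
    · obtain ⟨p, hp⟩ := hPne
      refine absurd hp (disjoint_left.mp hBP ?_)
      by_cases hpD : p ∈ D
      · exact hDB' hpD
      · exact hB₁.ssubset.subset (h (mem_compl.mpr hpD))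
  · rcases compatible_iff.mp (hP D hD) with h | h | h | h
    · by_cases hDP : D = P
      · exact Or.inr (Or.inl (hDP ▸ subset_union_left))
      -- otherwise `Dᶜ` would be a path split above `B`
      have hDc : Dᶜ ∈ T.pathSplits P x := mem_pathSplits.mpr ⟨T.compl_mem' hD,
        mem_compl.mpr (disjoint_right.mp hDB' hxB), disjoint_compl_left_iff.mpr h,
        fun h' => hDP (compl_injective h')⟩
      have : Dᶜ = B := subset_antisymm (hB.2 hDc) (subset_compl_iff_disjoint_left.mpr hDB')
      exact absurd (compl_eq_comm.mp this).symm hDBc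
    · exact Or.inr (Or.inl (h.trans subset_union_left))
    · exact Or.inr (Or.inr (Or.inl (disjoint_union_left.mpr
        ⟨h, hDB'.symm.mono_left hB₁.ssubset.subset⟩)))
    · exact Or.inr (Or.inr (Or.inr ((compl_subset_compl.mpr subset_union_left).trans h)))

theorem compatible_union (hP : ∀ D ∈ T.splits, Compatible P D) (hPne : P.Nonempty)
    (hB : IsGreatest (T.pathSplits P x : Set (Finset (Fin n))) B) (hB₁ : T.IsChild B B₁ x)
    (hD : D ∈ T.splits) (hDB : D ≠ B) (hDBc : D ≠ Bᶜ) : Compatible (P ∪ B₁) D := by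
  have hDc := T.compl_mem' hD
  have hDcB : Dᶜ ≠ B := fun h => hDBc (compl_eq_comm.mp h).symm
  have hDcBc : Dᶜ ≠ Bᶜ := fun h => hDB (compl_injective h)
  rcases compatible_iff.mp (T.compat D hD B (mem_pathSplits.mp hB.1).1) with h | h | h | h
  · exact compatible_union_of_subset_or_disjoint hP hPne hB hB₁ hD hDB hDBc (Or.inl h)
  · exact (compatible_union_of_subset_or_disjoint hP hPne hB hB₁ hDc hDcB hDcBc
      (Or.inr (disjoint_compl_left_iff.mpr h))).of_compl_right
  · exact compatible_union_of_subset_or_disjoint hP hPne hB hB₁ hD hDB hDBc (Or.inr h)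
  · exact (compatible_union_of_subset_or_disjoint hP hPne hB hB₁ hDc hDcB hDcBc
      (Or.inl h)).of_compl_right

theorem union_notMem_splits (hPne : P.Nonempty) (hB : B ∈ T.pathSplits P x)
    (hB₁ : T.IsChild B B₁ x) : P ∪ B₁ ∉ T.splits := by
  obtain ⟨hBT, hxB, hBP, hBPc⟩ := mem_pathSplits.mp hB
  obtain ⟨p, hp⟩ := hPne
  intro hN
  rcases compatible_iff.mp (T.compat _ hN B hBT) with h | h | h | h
  · exact disjoint_left.mp hBP (h (mem_union_left _ hp)) hp
  · obtain ⟨y, hyB, hyB₁⟩ := exists_of_ssubset hB₁.ssubset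
    exact (mem_union.mp (h hyB)).elim (disjoint_left.mp hBP hyB) hyB₁
  · exact disjoint_left.mp h (mem_union_right _ hB₁.mem) hxB
  · refine hBPc (subset_antisymm (subset_compl_iff_disjoint_left.mpr hBP.symm) fun y hy => ?_)
    by_cases hyB₁ : y ∈ B₁
    · exact hB₁.ssubset.subset hyB₁
    · exact h (by simp_all)

theorem card_union_mem (hPne : P.Nonempty) (hB : B ∈ T.pathSplits P x)
    (hB₁ : T.IsChild B B₁ x) : 2 ≤ #(P ∪ B₁) ∧ #(P ∪ B₁) ≤ n - 2 := by
  obtain ⟨-, hxB, hBP, hBPc⟩ := mem_pathSplits.mp hB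
  obtain ⟨p, hp⟩ := hPne
  obtain ⟨y, hyB, hyB₁⟩ := exists_of_ssubset hB₁.ssubset
  obtain ⟨z, hzP, hzB⟩ := exists_of_ssubset
    (ssubset_of_subset_of_ne (subset_compl_iff_disjoint_left.mpr hBP.symm) hBPc)
  have h₁ : 1 < #(P ∪ B₁) := one_lt_card.mpr ⟨p, mem_union_left _ hp, x,
    mem_union_right _ hB₁.mem, fun h => disjoint_left.mp hBP hxB (h ▸ hp)⟩
  have h₂ : 1 < #(P ∪ B₁)ᶜ := one_lt_card.mpr ⟨y, by simp [hyB₁, disjoint_left.mp hBP hyB], z,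
    by simpa [hzP] using fun h => hzB (hB₁.ssubset.subset h), fun h => hzB (h ▸ hyB)⟩
  rw [card_compl, Fintype.card_fin] at h₂
  omega

theorem pathSplits_ssubset_of_exchange {T' : TrivalentTree n} {N : Finset (Fin n)}
    (hPne : P.Nonempty) (hB : B ∈ T.pathSplits P x) (hPN : P ⊆ N) (hxN : x ∈ N)
    (hNT : N ∉ T.splits) (hT' : T'.splits = insert N (insert Nᶜ (T.splits \ {B, Bᶜ}))) :
    T'.pathSplits P x ⊂ T.pathSplits P x := by
  obtain ⟨hBT, hxB, -, -⟩ := mem_pathSplits.mp hB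
  obtain ⟨p, hp⟩ := hPne
  refine (ssubset_iff_of_subset fun A hA => ?_).mpr ⟨B, hB, fun hB' => ?_⟩
  · obtain ⟨hAT', hxA, hAP, hAPc⟩ := mem_pathSplits.mp hA
    rw [hT', mem_insert, mem_insert] at hAT'
    rcases hAT' with rfl | rfl | hAT
    · exact absurd hp (disjoint_left.mp hAP (hPN hp))
    · exact absurd hxN (mem_compl.mp hxA)
    · exact mem_pathSplits.mpr ⟨(mem_sdiff.mp hAT).1, hxA, hAP, hAPc⟩
  · rw [mem_pathSplits, hT', mem_insert, mem_insert] at hB'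
    rcases hB'.1 with rfl | rfl | hBT'
    · exact hNT hBT
    · exact mem_compl.mp hxB hxN
    · simp at hBT'

theorem exists_adj_pathSplits_ssubset (T : TrivalentTree n)
    (hP : ∀ D ∈ T.splits, Compatible P D) (hPne : P.Nonempty) (h : (T.pathSplits P x).Nonempty) :
    ∃ T' : TrivalentTree n, (NNIGraph n).Adj T T' ∧ (∀ D ∈ T'.splits, Compatible P D) ∧
      (∀ C ∈ T.splits, C ⊆ P → C ∈ T'.splits) ∧ T'.pathSplits P x ⊂ T.pathSplits P x := by
  obtain ⟨B, hB⟩ := T.exists_isGreatest_pathSplits hPne h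
  obtain ⟨hBT, hxB, hBP, hBPc⟩ := mem_pathSplits.mp hB.1
  obtain ⟨B₁, hB₁⟩ := T.exists_isChild hBT hxB (disjoint_right.mp hBP hPne.choose_spec)
  have hNT := union_notMem_splits hPne hB.1 hB₁
  obtain ⟨T', hadj, hT'⟩ := T.exists_adj_of_exchange hBT (card_union_mem hPne hB.1 hB₁) hNT
    fun D hD => by
      simp only [mem_sdiff, mem_insert, mem_singleton, not_or] at hD
      exact compatible_union hP hPne hB hB₁ hD.1 hD.2.1 hD.2.2
  refine ⟨T', hadj, fun D hD => ?_, fun C hC hCP => ?_, pathSplits_ssubset_of_exchange hPne hB.1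
    subset_union_left (mem_union_right _ hB₁.mem) hNT hT'⟩
  · rw [hT', mem_insert, mem_insert] at hD
    rcases hD with rfl | rfl | hD
    · exact compatible_iff.mpr (Or.inl subset_union_left)
    · exact compatible_iff.mpr
        (Or.inr (Or.inr (Or.inl (disjoint_compl_right_iff.mpr subset_union_left))))
    · exact hP D (mem_sdiff.mp hD).1
  · rw [hT']
    refine mem_insert_of_mem (mem_insert_of_mem (mem_sdiff.mpr ⟨hC, ?_⟩))
    rw [mem_insert, mem_singleton]
    rintro (rfl | rfl)
    · exact disjoint_left.mp hBP hxB (hCP hxB)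
    · exact hBPc (subset_antisymm (subset_compl_iff_disjoint_left.mpr hBP.symm)
        (compl_le_iff_compl_le.mp hCP))

theorem exists_reachable_insert_mem (hPne : P.Nonempty)
    (hI : 2 ≤ #(insert x P) ∧ #(insert x P) ≤ n - 2) (T : TrivalentTree n)
    (hP : ∀ D ∈ T.splits, Compatible P D) :
    ∃ T' : TrivalentTree n, (NNIGraph n).Reachable T T' ∧
      (∀ C ∈ T.splits, C ⊆ P → C ∈ T'.splits) ∧ insert x P ∈ T'.splits := by
  induction hk : #(T.pathSplits P x) using Nat.strong_induction_on generalizing T with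
  | _ k ih =>
  obtain h | h := (T.pathSplits P x).eq_empty_or_nonempty
  · exact ⟨T, .refl T, fun C hC _ => hC, T.insert_mem_of_pathSplits_eq_empty hP hI h⟩
  obtain ⟨T₁, hadj, hP₁, hkeep₁, hlt⟩ := T.exists_adj_pathSplits_ssubset hP hPne h
  obtain ⟨T₂, hreach, hkeep₂, hmem⟩ := ih _ (hk ▸ card_lt_card hlt) T₁ hP₁ rfl
  exact ⟨T₂, hadj.reachable.trans hreach, fun C hC hCP => hkeep₂ C (hkeep₁ C hC hCP) hCP, hmem⟩

end TrivalentTree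

def initialLeaves (n k : ℕ) : Finset (Fin n) :=
  univ.filter fun i => (i : ℕ) < k

theorem card_initialLeaves {k : ℕ} (hk : k ≤ n) : #(initialLeaves n k) = k := by
  rw [initialLeaves, Fin.card_filter_val_lt, min_eq_right hk]

theorem initialLeaves_subset_initialLeaves {k l : ℕ} (h : k ≤ l) :
    initialLeaves n k ⊆ initialLeaves n l := fun i hi => by
  simp only [initialLeaves, mem_filter, mem_univ, true_and] at hi ⊢
  omega

theorem insert_initialLeaves {k : ℕ} (hk : k < n) :
    insert ⟨k, hk⟩ (initialLeaves n k) = initialLeaves n (k + 1) := by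
  ext i
  simp only [initialLeaves, mem_insert, mem_filter, mem_univ, true_and, Fin.ext_iff]
  omega

def caterpillarSplits (n : ℕ) : Finset (Finset (Fin n)) :=
  (Icc 2 (n - 2)).image (initialLeaves n) ∪ (Icc 2 (n - 2)).image fun k => (initialLeaves n k)ᶜ

theorem mem_caterpillarSplits {A : Finset (Fin n)} : A ∈ caterpillarSplits n ↔
    ∃ k ∈ Icc 2 (n - 2), initialLeaves n k = A ∨ (initialLeaves n k)ᶜ = A := by
  simp only [caterpillarSplits, mem_union, mem_image]
  grind

theorem isSplitSystem_caterpillarSplits : IsSplitSystem (caterpillarSplits n) where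
  card_mem A hA := by
    obtain ⟨k, hk, rfl | rfl⟩ := mem_caterpillarSplits.mp hA <;> rw [mem_Icc] at hk
    · rw [card_initialLeaves (by omega)]
      omega
    · rw [card_compl, Fintype.card_fin, card_initialLeaves (by omega)]
      omega
  compatible A hA B hB := by
    have hnested (k l : ℕ) : Compatible (initialLeaves n k) (initialLeaves n l) :=
      (le_total k l).elim (fun h => Or.inl (initialLeaves_subset_initialLeaves h))
        (fun h => Or.inr (Or.inl (initialLeaves_subset_initialLeaves h)))
    obtain ⟨k, -, rfl | rfl⟩ := mem_caterpillarSplits.mp hA <;>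
    obtain ⟨l, -, rfl | rfl⟩ := mem_caterpillarSplits.mp hB
    · exact hnested k l
    · exact (hnested k l).compl_right
    · exact (hnested k l).compl_left
    · exact (hnested k l).compl_left.compl_right
  compl_mem A hA := by
    obtain ⟨k, hk, rfl | rfl⟩ := mem_caterpillarSplits.mp hA
    · exact mem_caterpillarSplits.mpr ⟨k, hk, Or.inr rfl⟩
    · exact mem_caterpillarSplits.mpr ⟨k, hk, Or.inl (compl_compl _).symm⟩

theorem card_caterpillarSplits : #(caterpillarSplits n) = 2 * (n - 3) := by
  have hinj : Set.InjOn (initialLeaves n) (Icc 2 (n - 2) : Set ℕ) := fun k hk l hl h => by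
    simp only [coe_Icc, Set.mem_Icc] at hk hl
    rw [← card_initialLeaves (n := n) (k := k) (by omega), h, card_initialLeaves (by omega)]
  have hdisj : Disjoint ((Icc 2 (n - 2)).image (initialLeaves n))
      ((Icc 2 (n - 2)).image fun k => (initialLeaves n k)ᶜ) := by
    simp only [disjoint_left, mem_image, mem_Icc, not_exists, not_and]
    rintro _ ⟨k, hk, rfl⟩ l hl h
    have h0 : (⟨0, by omega⟩ : Fin n) ∈ initialLeaves n k := by simp [initialLeaves]; omega
    rw [← h, mem_compl] at h0
    exact h0 (by simp [initialLeaves]; omega)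
  rw [caterpillarSplits, card_union_of_disjoint hdisj, card_image_of_injOn hinj,
    card_image_of_injOn (fun k hk l hl h => hinj hk hl (compl_injective h)), Nat.card_Icc]
  omega

def caterpillar (n : ℕ) : TrivalentTree n :=
  .ofSplitSystem isSplitSystem_caterpillarSplits card_caterpillarSplits

namespace TrivalentTree

def ContainsInitialSplits (T : TrivalentTree n) (k : ℕ) : Prop :=
  ∀ i ∈ Icc 2 k, initialLeaves n i ∈ T.splits

theorem exists_reachable_containsInitialSplits (T : TrivalentTree n) {k : ℕ} (hk : k ≤ n - 2) :
    ∃ T' : TrivalentTree n, (NNIGraph n).Reachable T T' ∧ T'.ContainsInitialSplits k := by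
  induction k with
  | zero => exact ⟨T, .refl T, fun i hi => by simp at hi⟩
  | succ k ih =>
  obtain ⟨T₁, h₁, hT₁⟩ := ih (by omega)
  obtain rfl | hk₁ := Nat.eq_zero_or_pos k
  · exact ⟨T₁, h₁, fun i hi => by simp at hi⟩
  have hP : ∀ D ∈ T₁.splits, Compatible (initialLeaves n k) D := by
    rcases (show k = 1 ∨ 2 ≤ k by omega) with rfl | hk₂
    · obtain ⟨y, hy⟩ := card_eq_one.mp (card_initialLeaves (n := n) (by omega))
      exact fun D _ => hy ▸ compatible_singleton y D
    · exact T₁.compat _ (hT₁ k (mem_Icc.mpr ⟨hk₂, le_rfl⟩))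
  have hlt : k < n := by omega
  obtain ⟨T₂, h₂, hkeep, hmem⟩ := T₁.exists_reachable_insert_mem (x := ⟨k, hlt⟩)
    (card_pos.mp (by rw [card_initialLeaves hlt.le]; omega))
    (by rw [insert_initialLeaves hlt, card_initialLeaves (by omega)]; omega) hP
  refine ⟨T₂, h₁.trans h₂, fun i hi => ?_⟩
  rw [mem_Icc] at hi
  rcases (show i ≤ k ∨ i = k + 1 by omega) with hik | rfl
  · exact hkeep _ (hT₁ i (mem_Icc.mpr ⟨hi.1, hik⟩)) (initialLeaves_subset_initialLeaves hik)
  · rwa [insert_initialLeaves hlt] at hmem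

theorem eq_caterpillar_of_containsInitialSplits {T : TrivalentTree n}
    (hT : T.ContainsInitialSplits (n - 2)) : T = caterpillar n := by
  refine (eq_of_subset fun A hA => ?_).symm
  obtain ⟨k, hk, rfl | rfl⟩ := mem_caterpillarSplits.mp hA
  · exact hT k hk
  · exact T.compl_mem' (hT k hk)

end TrivalentTree

theorem NNIGraph_connected_general (n : ℕ) : (NNIGraph n).Connected := by
  refine (SimpleGraph.connected_iff_exists_forall_reachable _).mpr ⟨caterpillar n, fun T => ?_⟩
  obtain ⟨T', hTT', hT'⟩ := T.exists_reachable_containsInitialSplits le_rfl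
  exact (TrivalentTree.eq_caterpillar_of_containsInitialSplits hT' ▸ hTT').symm

/-- The NNI graph on trivalent trees with n ≥ 4 labeled leaves is connected:
tropical M_{0,n} is connected in codimension 1. -/
theorem NNIGraph_connected (n : ℕ) (hn : 4 ≤ n) : (NNIGraph n).Connected :=
  NNIGraph_connected_general n
end
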